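/- Fix ρ with 0 < |ρ| < 1 and c > 0, and let W, Z be independent standard normal. Define T'(γ) = (√(1−ρ²)W + ρZ)·1{|Z+γ|>c} + (W − ργ/√(1−ρ²))·1{|Z+γ|≤c}. For 0 < v ≤ 1/2 and q = Φ^{-1}(1−v), there exists γ ∈ ℝ such that Pr(T'(γ) ≤ q) < Φ(q), i.e., the (1−v)-quantile of T'(γ) strictly exceeds Φ^{-1}(1−v) for some γ. -/
import Mathlib

set_option maxHeartbeats 1000000

open MeasureTheory ProbabilityTheory Set
open scoped ENNReal

noncomputable def stdPhi (u : ℝ) : ℝ := (Real.sqrt (2 * Real.pi))⁻¹ * Real.exp (-(u ^ 2) / 2)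

noncomputable def stdCdf (x : ℝ) : ℝ := ∫ u in Iic x, stdPhi u

noncomputable def Tstat (ρ c γ : ℝ) (p : ℝ × ℝ) : ℝ :=
  if c < |p.2 + γ| then Real.sqrt (1 - ρ ^ 2) * p.1 + ρ * p.2
  else p.1 - ρ * γ / Real.sqrt (1 - ρ ^ 2)

noncomputable def stdNormal2 : Measure (ℝ × ℝ) :=
  (gaussianReal 0 1).prod (gaussianReal 0 1)

lemma stdPhi_pos (u : ℝ) : 0 < stdPhi u := by
  unfold stdPhi
  have : 0 < Real.sqrt (2 * Real.pi) := Real.sqrt_pos.2 (by positivity)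
  positivity

lemma stdPhi_cont : Continuous stdPhi :=
  continuous_const.mul (Real.continuous_exp.comp ((continuous_pow 2).neg.div_const 2))

lemma stdPhi_eq : stdPhi = fun u : ℝ => (Real.sqrt (2 * Real.pi))⁻¹ * Real.exp (-(1/2 : ℝ) * u ^ 2) := by
  funext u; unfold stdPhi; congr 1; ring_nf

lemma stdPhi_integrable : Integrable stdPhi := by
  rw [stdPhi_eq]
  exact (integrable_exp_neg_mul_sq (by norm_num)).const_mul _

lemma stdPhi_le {x y : ℝ} (h : y ^ 2 ≤ x ^ 2) : stdPhi x ≤ stdPhi y := by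
  unfold stdPhi
  have := Real.exp_le_exp.mpr (by linarith : -(x ^ 2) / 2 ≤ -(y ^ 2) / 2)
  have h0 : (0:ℝ) ≤ (Real.sqrt (2 * Real.pi))⁻¹ := by positivity
  exact mul_le_mul_of_nonneg_left this h0

lemma stdPhi_lt {x y : ℝ} (h : y ^ 2 < x ^ 2) : stdPhi x < stdPhi y := by
  unfold stdPhi
  have := Real.exp_lt_exp.mpr (by linarith : -(x ^ 2) / 2 < -(y ^ 2) / 2)
  have h0 : (0:ℝ) < (Real.sqrt (2 * Real.pi))⁻¹ := by
    have : 0 < Real.sqrt (2 * Real.pi) := Real.sqrt_pos.2 (by positivity)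
    positivity
  exact (mul_lt_mul_iff_right₀ h0).2 this

lemma stdCdf_sub (x y : ℝ) : stdCdf y - stdCdf x = ∫ u in x..y, stdPhi u :=
  intervalIntegral.integral_Iic_sub_Iic (Integrable.integrableOn stdPhi_integrable) (Integrable.integrableOn stdPhi_integrable)

lemma stdCdf_mono : Monotone stdCdf := by
  intro x y hxy
  have h := stdCdf_sub x y
  have : 0 ≤ ∫ u in x..y, stdPhi u :=
    intervalIntegral.integral_nonneg hxy fun u _ => (stdPhi_pos u).le
  linarith

lemma stdCdf_strictMono : StrictMono stdCdf := by
  intro x y hxy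
  have h := stdCdf_sub x y
  have : 0 < ∫ u in x..y, stdPhi u := by
    apply intervalIntegral.intervalIntegral_pos_of_pos_on
      (stdPhi_cont.intervalIntegrable _ _) (fun u _ => stdPhi_pos u) hxy
  linarith

lemma stdCdf_nonneg (x : ℝ) : 0 ≤ stdCdf x :=
  setIntegral_nonneg measurableSet_Iic fun u _ => (stdPhi_pos u).le

lemma conv2 {a t : ℝ} (ht : 0 < t) (hat : a + t ≤ 0) :
    2 * stdCdf a < stdCdf (a - t) + stdCdf (a + t) := by
  have h1 := stdCdf_sub a (a + t)
  have h2 := stdCdf_sub (a - t) a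
  have h3 : (∫ u in (a-t)..a, stdPhi u) = ∫ u in a..(a+t), stdPhi (u - t) := by
    rw [intervalIntegral.integral_comp_sub_right (f := stdPhi) (d := t)]
    norm_num
  have c2 : Continuous (fun u : ℝ => stdPhi (u - t)) := by
    exact stdPhi_cont.comp (continuous_id.sub continuous_const)
  have key : 0 < ∫ u in a..(a+t), (stdPhi u - stdPhi (u - t)) := by
    apply intervalIntegral.intervalIntegral_pos_of_pos_on
    · exact (stdPhi_cont.sub c2).intervalIntegrable _ _
    · intro u hu
      obtain ⟨hu1, hu2⟩ := hu
      have : u ^ 2 < (u - t) ^ 2 := by nlinarith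
      have := stdPhi_lt this
      linarith
    · linarith
  rw [intervalIntegral.integral_sub (stdPhi_cont.intervalIntegrable _ _)
    (c2.intervalIntegrable _ _)] at key
  rw [← h3] at key
  linarith
lemma stdPhi_even (x : ℝ) : stdPhi (-x) = stdPhi x := by unfold stdPhi; norm_num

lemma gaussianPDFReal_eq : gaussianPDFReal 0 1 = stdPhi := by
  funext x
  unfold gaussianPDFReal stdPhi
  norm_num

lemma stdPhi_total : ∫ u, stdPhi u = 1 := by
  rw [← gaussianPDFReal_eq]
  exact integral_gaussianPDFReal_eq_one 0 one_ne_zero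

lemma stdCdf_zero : stdCdf 0 = 1 / 2 := by
  have h1 : stdCdf 0 + ∫ u in Ioi (0:ℝ), stdPhi u = 1 := by
    rw [stdCdf, intervalIntegral.integral_Iic_add_Ioi (Integrable.integrableOn stdPhi_integrable)
      (Integrable.integrableOn stdPhi_integrable)]
    exact stdPhi_total
  have h2 : (∫ u in Ioi (0:ℝ), stdPhi u) = stdCdf 0 := by
    have h3 : (∫ x in Iic (0:ℝ), stdPhi (-x)) = ∫ x in Ioi (-(0:ℝ)), stdPhi x :=
      integral_comp_neg_Iic 0 stdPhi
    simp only [neg_zero, stdPhi_even] at h3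
    rw [← h3, stdCdf]
  linarith

lemma stdCdf_le_one (x : ℝ) : stdCdf x ≤ 1 := by
  have h1 : stdCdf x + ∫ u in Ioi x, stdPhi u = 1 := by
    rw [stdCdf, intervalIntegral.integral_Iic_add_Ioi (Integrable.integrableOn stdPhi_integrable)
      (Integrable.integrableOn stdPhi_integrable)]
    exact stdPhi_total
  have h2 : 0 ≤ ∫ u in Ioi x, stdPhi u :=
    setIntegral_nonneg measurableSet_Ioi fun u _ => (stdPhi_pos u).le
  linarith

lemma nu_def : gaussianReal 0 1 = volume.withDensity (fun x => ENNReal.ofReal (stdPhi x)) := by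
  rw [gaussianReal_of_var_ne_zero 0 one_ne_zero]
  congr 1
  funext x
  rw [gaussianPDF, gaussianPDFReal_eq]

lemma nu_Iic (x : ℝ) : gaussianReal 0 1 (Iic x) = ENNReal.ofReal (stdCdf x) := by
  rw [gaussianReal_apply_eq_integral 0 one_ne_zero, stdCdf, gaussianPDFReal_eq]

lemma lint_phi_total : ∫⁻ z, ENNReal.ofReal (stdPhi z) = 1 := by
  have := lintegral_gaussianPDFReal_eq_one 0 one_ne_zero
  rwa [gaussianPDFReal_eq] at this

lemma stdCdf_cont : Continuous stdCdf := by
  have h : ∀ x, stdCdf x = stdCdf 0 + ∫ u in (0:ℝ)..x, stdPhi u := by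
    intro x
    have := stdCdf_sub 0 x
    linarith
  have hc : Continuous fun x => stdCdf 0 + ∫ u in (0:ℝ)..x, stdPhi u := by
    apply continuous_const.add
    exact intervalIntegral.continuous_primitive (fun a b => stdPhi_cont.intervalIntegrable a b) 0
  exact hc.congr fun x => (h x).symm

lemma stdPhi_mul_rot {s ρ : ℝ} (h1 : s ^ 2 + ρ ^ 2 = 1) (w z : ℝ) :
    stdPhi (s * w + ρ * z) * stdPhi (-ρ * w + s * z) = stdPhi w * stdPhi z := by
  unfold stdPhi
  rw [mul_mul_mul_comm, ← Real.exp_add, mul_mul_mul_comm, ← Real.exp_add]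
  congr 2
  have : (s * w + ρ * z) ^ 2 + (-ρ * w + s * z) ^ 2 = w ^ 2 + z ^ 2 := by nlinarith [h1]
  field_simp
  linarith [this]

lemma rot {s ρ : ℝ} (hs : 0 < s) (h1 : s ^ 2 + ρ ^ 2 = 1) (q : ℝ) :
    (gaussianReal 0 1).prod (gaussianReal 0 1) {p : ℝ × ℝ | s * p.1 + ρ * p.2 ≤ q}
      = ENNReal.ofReal (stdCdf q) := by
  set S : Set (ℝ × ℝ) := {p : ℝ × ℝ | s * p.1 + ρ * p.2 ≤ q} with hS
  have hSm : MeasurableSet S :=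
    measurableSet_le (by fun_prop) measurable_const
  -- the rotation
  set L := Matrix.toLin (Module.Basis.finTwoProd ℝ) (Module.Basis.finTwoProd ℝ) !![s, ρ; -ρ, s] with hL
  have hLapp : ∀ p : ℝ × ℝ, L p = (s * p.1 + ρ * p.2, -ρ * p.1 + s * p.2) := by
    intro p
    rw [hL, Matrix.toLin_finTwoProd_apply]
  have hdet : LinearMap.det L = 1 := by
    rw [hL, LinearMap.det_toLin, Matrix.det_fin_two_of]
    nlinarith [h1]
  have hLcont : Continuous L := L.continuous_of_finiteDimensional
  have hmap : Measure.map L volume = (volume : Measure (ℝ × ℝ)) := by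
    rw [Measure.map_linearMap_addHaar_eq_smul_addHaar volume (by rw [hdet]; exact one_ne_zero)]
    rw [hdet]
    norm_num
  -- densities
  set dens : ℝ × ℝ → ℝ≥0∞ := fun p => ENNReal.ofReal (stdPhi p.1 * stdPhi p.2) with hdens
  have hdensm : Measurable dens := by
    apply Measurable.ennreal_ofReal
    exact ((stdPhi_cont.comp continuous_fst).mul (stdPhi_cont.comp continuous_snd)).measurable
  set F2 : ℝ × ℝ → ℝ≥0∞ := S.indicator dens with hF2
  have hF2m : Measurable F2 := hdensm.indicator hSm
  set G2 : ℝ × ℝ → ℝ≥0∞ := (Iic q ×ˢ univ).indicator dens with hG2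
  have hG2m : Measurable G2 := hdensm.indicator (measurableSet_Iic.prod MeasurableSet.univ)
  have hcomp : ∀ p : ℝ × ℝ, F2 p = G2 (L p) := by
    intro p
    rw [hF2, hG2, hLapp]
    by_cases hp : s * p.1 + ρ * p.2 ≤ q
    · rw [indicator_of_mem (by exact hp : p ∈ S),
        indicator_of_mem (by simp [hp] : ((s * p.1 + ρ * p.2, -ρ * p.1 + s * p.2) : ℝ × ℝ) ∈ Iic q ×ˢ univ)]
      rw [hdens]
      simp only
      rw [stdPhi_mul_rot h1]
    · rw [indicator_of_notMem (by exact hp : p ∉ S),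
        indicator_of_notMem (by simp [hp])]
  -- step 1: slice the product measure
  have slice : ∀ z : ℝ, ((fun w => (w, z)) ⁻¹' S) = Iic ((q - ρ * z) / s) := by
    intro z
    ext w
    simp only [mem_preimage, hS, mem_setOf_eq, mem_Iic]
    rw [le_div_iff₀ hs]
    constructor <;> intro h <;> nlinarith
  have step1 : (gaussianReal 0 1).prod (gaussianReal 0 1) S
      = ∫⁻ z, ENNReal.ofReal (stdCdf ((q - ρ * z) / s)) ∂(gaussianReal 0 1) := by
    rw [Measure.prod_apply_symm hSm]
    congr 1
    funext z
    rw [slice z, nu_Iic]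
  -- step 2: convert to a double Lebesgue integral
  have hcdfval : ∀ y : ℝ, ENNReal.ofReal (stdCdf y) = ∫⁻ w in Iic y, ENNReal.ofReal (stdPhi w) := by
    intro y
    rw [← nu_Iic, nu_def, withDensity_apply _ measurableSet_Iic]
  have step2 : (∫⁻ z, ENNReal.ofReal (stdCdf ((q - ρ * z) / s)) ∂(gaussianReal 0 1))
      = ∫⁻ z, ∫⁻ w, F2 (w, z) := by
    rw [nu_def, lintegral_withDensity_eq_lintegral_mul _ (stdPhi_cont.measurable.ennreal_ofReal)
      (by exact (stdCdf_cont.comp (by fun_prop)).measurable.ennreal_ofReal)]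
    congr 1
    funext z
    simp only [Pi.mul_apply]
    rw [hcdfval]
    rw [← lintegral_const_mul _ (stdPhi_cont.measurable.ennreal_ofReal)]
    rw [← lintegral_indicator measurableSet_Iic]
    congr 1
    funext w
    rw [hF2]
    by_cases hw : w ∈ Iic ((q - ρ * z) / s)
    · have hwS : (w, z) ∈ S := by
        rw [← slice z] at hw
        exact hw
      rw [indicator_of_mem hw, indicator_of_mem hwS, hdens]
      simp only
      rw [← ENNReal.ofReal_mul (stdPhi_pos z).le, mul_comm (stdPhi w)]
    · have hwS : (w, z) ∉ S := by
        rw [← slice z] at hw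
        exact hw
      rw [indicator_of_notMem hw, indicator_of_notMem hwS]
  -- step 3: Tonelli
  have step3 : (∫⁻ z, ∫⁻ w, F2 (w, z)) = ∫⁻ p, F2 p ∂(volume : Measure (ℝ × ℝ)) := by
    rw [Measure.volume_eq_prod]
    exact (lintegral_prod_symm' F2 hF2m).symm
  -- step 4: rotate
  have step4 : (∫⁻ p, F2 p ∂(volume : Measure (ℝ × ℝ)))
      = ∫⁻ p, G2 p ∂(volume : Measure (ℝ × ℝ)) := by
    calc ∫⁻ p, F2 p ∂(volume : Measure (ℝ × ℝ))
        = ∫⁻ p, G2 (L p) ∂(volume : Measure (ℝ × ℝ)) := by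
          congr 1; funext p; exact hcomp p
      _ = ∫⁻ p, G2 p ∂(Measure.map L volume) := (lintegral_map hG2m hLcont.measurable).symm
      _ = _ := by rw [hmap]
  -- step 5: evaluate
  have step5 : (∫⁻ p, G2 p ∂(volume : Measure (ℝ × ℝ))) = ENNReal.ofReal (stdCdf q) := by
    rw [Measure.volume_eq_prod, lintegral_prod _ hG2m.aemeasurable]
    have : ∀ w : ℝ, (∫⁻ z, G2 (w, z))
        = (Iic q).indicator (fun w => ENNReal.ofReal (stdPhi w)) w := by
      intro w
      by_cases hw : w ∈ Iic q
      · have : ∀ z : ℝ, G2 (w, z) = ENNReal.ofReal (stdPhi w) * ENNReal.ofReal (stdPhi z) := by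
          intro z
          rw [hG2, indicator_of_mem (by simp [hw] : ((w, z) : ℝ × ℝ) ∈ Iic q ×ˢ univ), hdens]
          exact ENNReal.ofReal_mul (stdPhi_pos w).le
        rw [lintegral_congr this, lintegral_const_mul _ (stdPhi_cont.measurable.ennreal_ofReal),
          lint_phi_total, mul_one, indicator_of_mem hw]
      · have : ∀ z : ℝ, G2 (w, z) = 0 := by
          intro z
          rw [hG2, indicator_of_notMem (by simp [hw])]
        rw [lintegral_congr this, lintegral_zero, indicator_of_notMem hw]
    rw [lintegral_congr this, lintegral_indicator measurableSet_Iic, ← hcdfval]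
  rw [step1, step2, step3, step4, step5]

-- the pairing inequality
lemma key_step {a b t w1 w2 : ℝ} (hab : a ≤ b) (ht : 0 < t) (hat : a + t ≤ 0)
    (hw1 : 0 < w1) (hw12 : w1 ≤ w2) :
    0 < (stdCdf (b - t) - stdCdf a) * w1 + (stdCdf (b + t) - stdCdf a) * w2 := by
  have h6 := conv2 ht hat
  have h1 : stdCdf (a - t) ≤ stdCdf (b - t) := stdCdf_mono (by linarith)
  have h2 : stdCdf (a + t) ≤ stdCdf (b + t) := stdCdf_mono (by linarith)
  have h7 : stdCdf (a - t) ≤ stdCdf a := stdCdf_mono (by linarith)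
  have hw2 : 0 < w2 := lt_of_lt_of_le hw1 hw12
  nlinarith [mul_le_mul_of_nonneg_right h1 hw1.le, mul_le_mul_of_nonneg_right h2 hw2.le,
    mul_le_mul_of_nonneg_left hw12 (by linarith : 0 ≤ stdCdf a - stdCdf (a - t)),
    mul_pos (by linarith : 0 < stdCdf (a - t) + stdCdf (a + t) - 2 * stdCdf a) hw2]

-- slicing lemma
lemma slice_lint {A : Set ℝ} (hA : MeasurableSet A) {g : ℝ → ℝ} (hg : Measurable g) :
    (gaussianReal 0 1).prod (gaussianReal 0 1) {p : ℝ × ℝ | p.2 ∈ A ∧ p.1 ≤ g p.2}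
      = ∫⁻ z in A, ENNReal.ofReal (stdCdf (g z)) ∂(gaussianReal 0 1) := by
  have hm : MeasurableSet {p : ℝ × ℝ | p.2 ∈ A ∧ p.1 ≤ g p.2} := by
    apply MeasurableSet.inter
    · exact measurable_snd hA
    · exact measurableSet_le measurable_fst (hg.comp measurable_snd)
  rw [Measure.prod_apply_symm hm]
  have : ∀ z : ℝ, gaussianReal 0 1 ((fun w => (w, z)) ⁻¹' {p : ℝ × ℝ | p.2 ∈ A ∧ p.1 ≤ g p.2})
      = A.indicator (fun z => ENNReal.ofReal (stdCdf (g z))) z := by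
    intro z
    by_cases hz : z ∈ A
    · have : ((fun w => (w, z)) ⁻¹' {p : ℝ × ℝ | p.2 ∈ A ∧ p.1 ≤ g p.2}) = Iic (g z) := by
        ext w; simp [hz]
      rw [this, nu_Iic, indicator_of_mem hz]
    · have : ((fun w => (w, z)) ⁻¹' {p : ℝ × ℝ | p.2 ∈ A ∧ p.1 ≤ g p.2}) = ∅ := by
        ext w; simp [hz]
      rw [this, measure_empty, indicator_of_notMem hz]
  rw [lintegral_congr this, lintegral_indicator hA]

-- conversion to a real integral over Icc
lemma lint_A {l r : ℝ} {G : ℝ → ℝ} (hG : Continuous G) (hGnn : ∀ z, 0 ≤ G z) :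
    (∫⁻ z in Icc l r, ENNReal.ofReal (G z) ∂(gaussianReal 0 1))
      = ENNReal.ofReal (∫ z in Icc l r, G z * stdPhi z) := by
  rw [nu_def, restrict_withDensity measurableSet_Icc,
    lintegral_withDensity_eq_lintegral_mul _ stdPhi_cont.measurable.ennreal_ofReal
      hG.measurable.ennreal_ofReal]
  have heq : ∀ z : ℝ, ((fun x => ENNReal.ofReal (stdPhi x)) * fun z => ENNReal.ofReal (G z)) z
      = ENNReal.ofReal (G z * stdPhi z) := by
    intro z
    simp only [Pi.mul_apply]
    rw [← ENNReal.ofReal_mul (stdPhi_pos z).le, mul_comm]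
  rw [lintegral_congr heq, ← ofReal_integral_eq_lintegral_ofReal]
  · exact ((hG.mul stdPhi_cont).integrableOn_Icc)
  · exact Filter.Eventually.of_forall fun z => mul_nonneg (hGnn z) (stdPhi_pos z).le

lemma core {ρ c q s m a : ℝ} (hρ0 : ρ ≠ 0) (hc : 0 < c) (hq : 0 ≤ q)
    (hs : 0 < s) (hs1 : s ≤ 1) (hρm : ρ * m = q * s + |ρ| * c) (ha : a = -(|ρ| * c) / s) :
    0 < ∫ z in Icc (m - c) (m + c), (stdCdf ((q - ρ * z) / s) - stdCdf a) * stdPhi z := by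
  have hρabs : 0 < |ρ| := abs_pos.2 hρ0
  set D : ℝ → ℝ := fun z => (stdCdf ((q - ρ * z) / s) - stdCdf a) * stdPhi z with hD
  have hDcont : Continuous D := by
    apply Continuous.mul
    · exact (stdCdf_cont.comp (by fun_prop)).sub continuous_const
    · exact stdPhi_cont
  have hlr : m - c ≤ m + c := by linarith
  have h1 : ∫ z in Icc (m - c) (m + c), D z = ∫ z in (m - c)..(m + c), D z := by
    rw [intervalIntegral.integral_of_le hlr, integral_Icc_eq_integral_Ioc]
  have e1 : m + -c = m - c := by ring
  have h2 : ∫ δ in (-c)..c, D (m + δ) = ∫ z in (m - c)..(m + c), D z := by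
    rw [intervalIntegral.integral_comp_add_left D m, e1]
  have h3 : ∫ δ in (0:ℝ)..c, (fun x => D (m + x)) (-δ) = ∫ x in (-c)..(0:ℝ), D (m + x) := by
    rw [intervalIntegral.integral_comp_neg (fun x => D (m + x))]
    norm_num
  have hint : ∀ u v : ℝ, IntervalIntegrable (fun δ => D (m + δ)) volume u v := fun u v =>
    (hDcont.comp (by fun_prop)).intervalIntegrable u v
  have hint2 : ∀ u v : ℝ, IntervalIntegrable (fun δ => D (m - δ)) volume u v := fun u v =>
    (hDcont.comp (by fun_prop)).intervalIntegrable u v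
  have h4 : ∫ δ in (-c)..c, D (m + δ)
      = (∫ δ in (-c)..(0:ℝ), D (m + δ)) + ∫ δ in (0:ℝ)..c, D (m + δ) :=
    (intervalIntegral.integral_add_adjacent_intervals (hint _ _) (hint _ _)).symm
  have h5 : ∫ δ in (0:ℝ)..c, (D (m + δ) + D (m - δ))
      = (∫ δ in (0:ℝ)..c, D (m + δ)) + ∫ δ in (0:ℝ)..c, D (m - δ) :=
    intervalIntegral.integral_add (hint _ _) (hint2 _ _)
  have hfun : (fun δ : ℝ => D (m - δ)) = (fun δ : ℝ => (fun x => D (m + x)) (-δ)) := by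
    funext δ
    simp only [sub_eq_add_neg]
  have h6 : ∫ δ in (0:ℝ)..c, D (m - δ) = ∫ δ in (-c)..(0:ℝ), D (m + δ) := by
    rw [← h3]
    exact congrFun (congrArg _ (congrArg _ hfun)) _
  have hpos : 0 < ∫ δ in (0:ℝ)..c, (D (m + δ) + D (m - δ)) := by
    apply intervalIntegral.intervalIntegral_pos_of_pos_on
    · exact ((hDcont.comp (by fun_prop)).add (hDcont.comp (by fun_prop))).intervalIntegrable _ _
    · intro δ hδ
      obtain ⟨hδ0, hδc⟩ := hδ
      simp only [hD]
      have ep : (q - ρ * (m + δ)) / s = (q - ρ * m) / s - ρ * δ / s := by ring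
      have em : (q - ρ * (m - δ)) / s = (q - ρ * m) / s + ρ * δ / s := by ring
      set b : ℝ := (q - ρ * m) / s with hb
      have hab : a ≤ b := by
        have : b - a = q * (1 - s) / s := by
          rw [hb, ha, hρm]
          field_simp
          ring
        nlinarith [mul_nonneg hq (by linarith : (0:ℝ) ≤ 1 - s),
          div_nonneg (mul_nonneg hq (by linarith : (0:ℝ) ≤ 1 - s)) hs.le]
      rcases lt_or_gt_of_ne hρ0 with hρneg | hρpos
      · -- ρ < 0
        have habs : |ρ| = -ρ := abs_of_neg hρneg
        set t : ℝ := -ρ * δ / s with htdef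
        have ht : 0 < t := by
          apply div_pos (mul_pos (by linarith) hδ0) hs
        have hat : a + t ≤ 0 := by
          rw [ha, habs, htdef]
          rw [div_add_div _ _ (ne_of_gt hs) (ne_of_gt hs)]
          apply div_nonpos_of_nonpos_of_nonneg
          · nlinarith [mul_pos hs (sub_pos.mpr hδc)]
          · positivity
        have hm : m < 0 := by nlinarith [hρm, mul_pos hρabs hc]
        have hw12 : stdPhi (m - δ) ≤ stdPhi (m + δ) := by
          apply stdPhi_le
          nlinarith
        have ep' : (q - ρ * (m + δ)) / s = b + t := by rw [ep, hb, htdef]; try ring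
        have em' : (q - ρ * (m - δ)) / s = b - t := by rw [em, hb, htdef]; try ring
        rw [ep', em']
        have := key_step hab ht hat (stdPhi_pos (m - δ)) hw12
        linarith
      · -- ρ > 0
        have habs : |ρ| = ρ := abs_of_pos hρpos
        set t : ℝ := ρ * δ / s with htdef
        have ht : 0 < t := div_pos (mul_pos hρpos hδ0) hs
        have hat : a + t ≤ 0 := by
          rw [ha, habs, htdef]
          rw [div_add_div _ _ (ne_of_gt hs) (ne_of_gt hs)]
          apply div_nonpos_of_nonpos_of_nonneg
          · nlinarith [mul_pos hs (sub_pos.mpr hδc)]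
          · positivity
        have hm : 0 < m := by nlinarith [hρm, mul_pos hρabs hc]
        have hw12 : stdPhi (m + δ) ≤ stdPhi (m - δ) := by
          apply stdPhi_le
          nlinarith
        have ep' : (q - ρ * (m + δ)) / s = b - t := by rw [ep, hb, htdef]; try ring
        have em' : (q - ρ * (m - δ)) / s = b + t := by rw [em, hb, htdef]; try ring
        rw [ep', em']
        have := key_step hab ht hat (stdPhi_pos (m + δ)) hw12
        linarith
    · exact hc
  linarith [h1, h2, h4, h5, h6, hpos]

theorem stmt_9 (ρ c : ℝ) (hρ0 : ρ ≠ 0) (hρ1 : |ρ| < 1) (hc : 0 < c)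
    (v q : ℝ) (hv0 : 0 < v) (hv1 : v ≤ 1 / 2) (hq : stdCdf q = 1 - v) :
    ∃ γ : ℝ, stdNormal2 {p | Tstat ρ c γ p ≤ q} < ENNReal.ofReal (stdCdf q) := by
  have hρsq : ρ ^ 2 < 1 := by nlinarith [sq_abs ρ, abs_nonneg ρ]
  set s : ℝ := Real.sqrt (1 - ρ ^ 2) with hsdef
  have hs : 0 < s := Real.sqrt_pos.2 (by linarith)
  have hs2 : s ^ 2 = 1 - ρ ^ 2 := Real.sq_sqrt (by linarith)
  have hs1 : s ≤ 1 := by nlinarith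
  have hq0 : 0 ≤ q := by
    by_contra h
    push_neg at h
    have h2 := stdCdf_strictMono h
    rw [stdCdf_zero, hq] at h2
    linarith
  have hρabs : 0 < |ρ| := abs_pos.2 hρ0
  set m : ℝ := (q * s + |ρ| * c) / ρ with hm
  set γ : ℝ := -m with hγ
  have hρm : ρ * m = q * s + |ρ| * c := by rw [hm]; field_simp
  set a : ℝ := q + ρ * γ / s with hadef
  have ha : a = -(|ρ| * c) / s := by
    rw [hadef, hγ]
    field_simp
    nlinarith [hρm]
  refine ⟨γ, ?_⟩
  set A : Set ℝ := Icc (m - c) (m + c) with hA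
  have hAmem : ∀ z : ℝ, (¬ c < |z + γ|) ↔ z ∈ A := by
    intro z
    rw [not_lt, abs_le, hA, mem_Icc, hγ]
    constructor <;> rintro ⟨h1, h2⟩ <;> constructor <;> linarith
  set B : Set (ℝ × ℝ) := {p : ℝ × ℝ | p.2 ∈ A} with hB
  have hBm : MeasurableSet B := measurable_snd measurableSet_Icc
  set S : Set (ℝ × ℝ) := {p : ℝ × ℝ | s * p.1 + ρ * p.2 ≤ q} with hS
  set E : Set (ℝ × ℝ) := {p : ℝ × ℝ | Tstat ρ c γ p ≤ q} with hE
  have hEB : E ∩ B = {p : ℝ × ℝ | p.2 ∈ A ∧ p.1 ≤ (fun _ : ℝ => a) p.2} := by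
    ext p
    simp only [hE, hB, mem_inter_iff, mem_setOf_eq, Tstat]
    constructor
    · rintro ⟨h1, h2⟩
      rw [if_neg ((hAmem p.2).mpr h2)] at h1
      refine ⟨h2, ?_⟩
      simp only [hadef]
      rw [← hsdef] at h1
      linarith
    · rintro ⟨h2, h1⟩
      refine ⟨?_, h2⟩
      rw [if_neg ((hAmem p.2).mpr h2)]
      simp only [hadef] at h1
      rw [← hsdef]
      linarith
  have hES : E \ B = S \ B := by
    ext p
    simp only [hE, hS, mem_diff, hB, mem_setOf_eq, Tstat]
    constructor
    · rintro ⟨h1, h2⟩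
      have hcge : c < |p.2 + γ| := by
        by_contra hnc
        exact h2 ((hAmem p.2).mp hnc)
      rw [if_pos hcge] at h1
      rw [← hsdef] at h1
      exact ⟨h1, h2⟩
    · rintro ⟨h1, h2⟩
      have hcge : c < |p.2 + γ| := by
        by_contra hnc
        exact h2 ((hAmem p.2).mp hnc)
      rw [if_pos hcge, ← hsdef]
      exact ⟨h1, h2⟩
  haveI hprob : IsProbabilityMeasure stdNormal2 := by
    unfold stdNormal2; infer_instance
  have hsplitE : stdNormal2 E = stdNormal2 (E ∩ B) + stdNormal2 (E \ B) :=
    (measure_inter_add_diff E hBm).symm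
  have hsplitS : stdNormal2 S = stdNormal2 (S ∩ B) + stdNormal2 (S \ B) :=
    (measure_inter_add_diff S hBm).symm
  have hSB : S ∩ B = {p : ℝ × ℝ | p.2 ∈ A ∧ p.1 ≤ (fun z : ℝ => (q - ρ * z) / s) p.2} := by
    ext p
    simp only [hS, hB, mem_inter_iff, mem_setOf_eq]
    rw [le_div_iff₀ hs]
    constructor <;> rintro ⟨h1, h2⟩
    · exact ⟨h2, by nlinarith⟩
    · exact ⟨by nlinarith, h1⟩
  have hEBv : stdNormal2 (E ∩ B) = ENNReal.ofReal (∫ z in A, stdCdf a * stdPhi z) := by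
    rw [hEB]
    unfold stdNormal2
    rw [slice_lint measurableSet_Icc measurable_const]
    exact lint_A continuous_const (fun _ => stdCdf_nonneg a)
  have hSBv : stdNormal2 (S ∩ B) = ENNReal.ofReal (∫ z in A, stdCdf ((q - ρ * z) / s) * stdPhi z) := by
    rw [hSB]
    unfold stdNormal2
    rw [slice_lint (g := fun z : ℝ => (q - ρ * z) / s) measurableSet_Icc (by fun_prop)]
    exact lint_A (stdCdf_cont.comp (by fun_prop)) (fun _ => stdCdf_nonneg _)
  have hcore := core hρ0 hc hq0 hs hs1 hρm ha
  have hi1 : IntegrableOn (fun z => stdCdf a * stdPhi z) A volume :=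
    (continuous_const.mul stdPhi_cont).integrableOn_Icc
  have hi2 : IntegrableOn (fun z => stdCdf ((q - ρ * z) / s) * stdPhi z) A volume :=
    ((stdCdf_cont.comp (by fun_prop)).mul stdPhi_cont).integrableOn_Icc
  have hdiff : (∫ z in A, stdCdf ((q - ρ * z) / s) * stdPhi z) - ∫ z in A, stdCdf a * stdPhi z
      = ∫ z in A, (stdCdf ((q - ρ * z) / s) - stdCdf a) * stdPhi z := by
    rw [← integral_sub hi2 hi1]
    congr 1
    funext z
    ring
  have hreallt : (∫ z in A, stdCdf a * stdPhi z) < ∫ z in A, stdCdf ((q - ρ * z) / s) * stdPhi z := by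
    rw [hA]
    have := hcore
    rw [← hA] at this ⊢
    linarith [hdiff]
  have hlt : stdNormal2 (E ∩ B) < stdNormal2 (S ∩ B) := by
    rw [hEBv, hSBv]
    rw [ENNReal.ofReal_lt_ofReal_iff_of_nonneg
      (setIntegral_nonneg measurableSet_Icc fun z _ =>
        mul_nonneg (stdCdf_nonneg a) (stdPhi_pos z).le)]
    exact hreallt
  calc stdNormal2 E = stdNormal2 (E ∩ B) + stdNormal2 (E \ B) := hsplitE
    _ = stdNormal2 (E ∩ B) + stdNormal2 (S \ B) := by rw [hES]
    _ < stdNormal2 (S ∩ B) + stdNormal2 (S \ B) :=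
        ENNReal.add_lt_add_right (measure_ne_top _ _) hlt
    _ = stdNormal2 S := hsplitS.symm
    _ = ENNReal.ofReal (stdCdf q) := by
        unfold stdNormal2
        exact rot hs (by nlinarith) q
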